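/- arXiv:1208.2427 — 2 statements merged into one kernel-verified Lean document; each statement's English description precedes it below -/
import Mathlib

section
/- Let G act sharply 2-transitively on Ω. Then any two involutions in G are conjugate in G. -/
/-!
An involution `σ ≠ 1` moves some point `x`, and then swaps `x` and `σ • x`. Given a second
involution `τ` swapping `y` and `τ • y`, pick `g` with `g • y = x` and `g • τ • y = σ • x`; then
`g⁻¹ * σ * g` and `τ` agree on the pair `y, τ • y`, so they coincide by sharpness.
-/

def IsSharply2Transitive (G Ω : Type*) [Group G] [MulAction G Ω] : Prop :=
  ∀ x y z w : Ω, x ≠ y → z ≠ w → ∃! g : G, g • x = z ∧ g • y = w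

namespace IsSharply2Transitive

variable {G Ω : Type*} [Group G] [MulAction G Ω]

theorem eq_of_smul_eq_smul (h : IsSharply2Transitive G Ω) {g k : G} {x y : Ω} (hxy : x ≠ y)
    (hx : g • x = k • x) (hy : g • y = k • y) : g = k := by
  obtain ⟨_, _, hunique⟩ := h x y (g • x) (g • y) hxy ((MulAction.injective g).ne hxy)
  exact (hunique g ⟨rfl, rfl⟩).trans (hunique k ⟨hx.symm, hy.symm⟩).symm

theorem exists_smul_ne [Nontrivial Ω] (h : IsSharply2Transitive G Ω) {g : G} (hg : g ≠ 1) :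
    ∃ x : Ω, g • x ≠ x := by
  by_contra! hfix
  obtain ⟨x, y, hxy⟩ := exists_pair_ne Ω
  exact hg (h.eq_of_smul_eq_smul hxy (by rw [hfix, one_smul]) (by rw [hfix, one_smul]))

theorem exists_conj_eq_of_sq_eq_one (h : IsSharply2Transitive G Ω) {σ τ : G}
    (hσ : σ ^ 2 = 1) (hτ : τ ^ 2 = 1) {x y : Ω} (hx : σ • x ≠ x) (hy : τ • y ≠ y) :
    ∃ g : G, g⁻¹ * σ * g = τ := by
  have swap {ρ : G} (hρ : ρ ^ 2 = 1) (z : Ω) : ρ • ρ • z = z := by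
    rw [smul_smul, ← sq, hρ, one_smul]
  obtain ⟨g, ⟨hgy, hgτy⟩, -⟩ := h y (τ • y) x (σ • x) hy.symm hx.symm
  refine ⟨g, h.eq_of_smul_eq_smul hy.symm ?_ ?_⟩
  · rw [mul_smul, mul_smul, hgy, ← hgτy, inv_smul_smul]
  · rw [mul_smul, mul_smul, hgτy, swap hσ, swap hτ, ← hgy, inv_smul_smul]

end IsSharply2Transitive

theorem involutions_are_conjugate {G Ω : Type*} [Group G] [MulAction G Ω] [Nontrivial Ω]
    (h : IsSharply2Transitive G Ω) (σ τ : G)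
    (hσ : orderOf σ = 2) (hτ : orderOf τ = 2) :
    ∃ g : G, g⁻¹ * σ * g = τ := by
  obtain ⟨hσ2, hσ1⟩ := orderOf_eq_prime_iff.mp hσ
  obtain ⟨hτ2, hτ1⟩ := orderOf_eq_prime_iff.mp hτ
  obtain ⟨x, hx⟩ := h.exists_smul_ne hσ1
  obtain ⟨y, hy⟩ := h.exists_smul_ne hτ1
  exact h.exists_conj_eq_of_sq_eq_one hσ2 hτ2 hx hy
end

section
/- Let G act sharply 2-transitively on Ω and let σ, τ ∈ G be involutions with στ ≠ 1. Then the element στ acts on Ω without fixed points. -/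
namespace IsSharply2Transitive

variable {G Ω : Type*} [Group G] [MulAction G Ω]

theorem exists_smul_eq_and_smul_eq (h : IsSharply2Transitive G Ω) {x y z w : Ω} (hxy : x ≠ y)
    (hzw : z ≠ w) : ∃ g : G, g • x = z ∧ g • y = w :=
  (h x y z w hxy hzw).exists

theorem eq_of_smul_eq_of_smul_eq (h : IsSharply2Transitive G Ω) {g g' : G} {x y : Ω}
    (hxy : x ≠ y) (hx : g • x = g' • x) (hy : g • y = g' • y) : g = g' :=
  (h x y (g • x) (g • y) hxy ((MulAction.injective g).ne hxy)).unique ⟨rfl, rfl⟩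
    ⟨hx.symm, hy.symm⟩

theorem eq_one_of_smul_eq_self (h : IsSharply2Transitive G Ω) {g : G} {x y : Ω} (hxy : x ≠ y)
    (hx : g • x = x) (hy : g • y = y) : g = 1 :=
  h.eq_of_smul_eq_of_smul_eq hxy (by rwa [one_smul]) (by rwa [one_smul])

theorem eq_of_mul_self_eq_one_of_smul_eq_ne (h : IsSharply2Transitive G Ω) {σ τ : G} {x : Ω}
    (hσ : σ * σ = 1) (hτ : τ * τ = 1) (hστ : σ • x = τ • x) (hx : σ • x ≠ x) : σ = τ := by
  refine h.eq_of_smul_eq_of_smul_eq hx.symm hστ ?_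
  rw [← mul_smul, hσ, hστ, ← mul_smul, hτ]

theorem eq_of_mul_self_eq_one_of_smul_eq_self [Nontrivial Ω] (h : IsSharply2Transitive G Ω)
    {σ τ : G} {x : Ω} (hσ : σ * σ = 1) (hτ : τ * τ = 1) (hσ1 : σ ≠ 1) (hτ1 : τ ≠ 1)
    (hσx : σ • x = x) (hτx : τ • x = x) : σ = τ := by
  obtain ⟨a, hax⟩ := exists_ne x
  have hσa : σ • a ≠ a := fun ha ↦ hσ1 (h.eq_one_of_smul_eq_self hax ha hσx)
  have hτa : τ • a ≠ a := fun ha ↦ hτ1 (h.eq_one_of_smul_eq_self hax ha hτx)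
  obtain ⟨g, hga, hgσa⟩ := h.exists_smul_eq_and_smul_eq hσa.symm hτa.symm
  have hconj : g * σ * g⁻¹ = τ := by
    refine h.eq_of_mul_self_eq_one_of_smul_eq_ne (x := a) ?_ hτ ?_ ?_
    · rw [show g * σ * g⁻¹ * (g * σ * g⁻¹) = g * (σ * σ) * g⁻¹ by group, hσ, mul_one,
        mul_inv_cancel]
    · rw [mul_smul, mul_smul, inv_smul_eq_iff.mpr hga.symm, hgσa]
    · rwa [mul_smul, mul_smul, inv_smul_eq_iff.mpr hga.symm, hgσa]
  have hτgx : τ • g • x = g • x := by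
    rw [← hconj, mul_smul, mul_smul, inv_smul_smul, hσx]
  have hgx : g • x = x := by
    by_contra hne
    exact hτ1 (h.eq_one_of_smul_eq_self hne hτgx hτx)
  rw [← hconj, h.eq_one_of_smul_eq_self hax hga hgx, one_mul, inv_one, mul_one]

end IsSharply2Transitive

theorem prod_involutions_fixed_point_free {G Ω : Type*} [Group G] [MulAction G Ω]
    [Nontrivial Ω] (h : IsSharply2Transitive G Ω) (σ τ : G)
    (hσ : orderOf σ = 2) (hτ : orderOf τ = 2) (hστ : σ * τ ≠ 1) :
    ∀ x : Ω, (σ * τ) • x ≠ x := by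
  intro x hx
  obtain ⟨hσ2, hσ1⟩ := orderOf_eq_prime_iff.mp hσ
  obtain ⟨hτ2, hτ1⟩ := orderOf_eq_prime_iff.mp hτ
  rw [sq] at hσ2 hτ2
  have hσx : σ • x = τ • x := by
    conv_lhs => rw [← hx, ← mul_smul, ← mul_assoc, hσ2, one_mul]
  have hσ_eq_τ : σ = τ := by
    by_cases hτx : τ • x = x
    · exact h.eq_of_mul_self_eq_one_of_smul_eq_self hσ2 hτ2 hσ1 hτ1 (hσx.trans hτx) hτx
    · exact h.eq_of_mul_self_eq_one_of_smul_eq_ne hσ2 hτ2 hσx (hσx ▸ hτx)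
  exact hστ (hσ_eq_τ ▸ hσ2)
end
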